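/- arXiv:math/0212052 — 2 statements merged into one kernel-verified Lean document; each statement's English description precedes it below -/
import Mathlib

section
/- Let M be a smooth manifold, n ≥ 1, and let {·,·} be an affine Jacobi bracket on the trivial bundle M×ℝⁿ. Then for any two basic functions F,G ∈ C^∞(M×ℝⁿ,ℝ), the function {F,G} is basic and {F,G} = F·{1,G} + G·{F,1}. -/
open scoped Manifold

/-- A Jacobi bracket on the smooth functions (those satisfying the predicate `S`)
of a space `N`: an ℝ-bilinear antisymmetric bracket satisfying the Jacobi identity
and the generalized Leibniz rule. -/
structure JacobiBracket (N : Type*) (S : (N → ℝ) → Prop) where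
  br : (N → ℝ) → (N → ℝ) → N → ℝ
  smooth_br : ∀ f g, S f → S g → S (br f g)
  add_left : ∀ f g h, S f → S g → S h → br (f + g) h = br f h + br g h
  smul_left : ∀ (c : ℝ) (f g : N → ℝ), S f → S g → br (c • f) g = c • br f g
  antisymm : ∀ f g, S f → S g → br f g = -br g f
  jacobi : ∀ f g h, S f → S g → S h →
    br f (br g h) + br g (br h f) + br h (br f g) = 0
  leibniz : ∀ f g h, S f → S g → S h →
    br f (g * h) = br f g * h + g * br f h - g * h * br f 1

/-- A function on the trivial bundle `M × ℝⁿ` is fibrewise affine if on each fibre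
it is an affine map `ℝⁿ → ℝ`. -/
def IsFibAffine {M : Type*} {n : ℕ} (F : M × (Fin n → ℝ) → ℝ) : Prop :=
  ∀ x : M, ∃ (μ : (Fin n → ℝ) →ₗ[ℝ] ℝ) (c : ℝ), ∀ v, F (x, v) = μ v + c

section

variable {EM : Type*} [NormedAddCommGroup EM] [NormedSpace ℝ EM] [FiniteDimensional ℝ EM]
  {HM : Type*} [TopologicalSpace HM] (IM : ModelWithCorners ℝ EM HM)
  (M : Type*) [TopologicalSpace M] [ChartedSpace HM M] [IsManifold IM ((⊤ : ℕ∞) : WithTop ℕ∞) M]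
  (n : ℕ)

/-- Smooth real functions on the total space of the trivial bundle `M × ℝⁿ`. -/
def SmoothBdl : (M × (Fin n → ℝ) → ℝ) → Prop :=
  fun F => ContMDiff (IM.prod (𝓘(ℝ, Fin n → ℝ))) 𝓘(ℝ, ℝ) (⊤ : ℕ∞) F

/-- Basic functions on the trivial bundle `M × ℝⁿ`: pullbacks of smooth functions
on `M` by the projection. -/
def IsBasic : (M × (Fin n → ℝ) → ℝ) → Prop :=
  fun F => ∃ f : M → ℝ, ContMDiff IM 𝓘(ℝ, ℝ) (⊤ : ℕ∞) f ∧ F = fun p => f p.1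

end

/-!
Leibniz's rule and antisymmetry give, for any functions `u, F, G`,
`{uF, uG} = G⬝{uF, u} + F⬝{u, uG} + u²⬝({F,G} - F⬝{1,G} - G⬝{F,1})`.
For `F, G` basic and `u` a fibre coordinate, every bracket on the right is fibrewise affine
and so is the factor in parentheses; a fibrewise affine function that stays affine after
multiplication by `u²` vanishes. Similarly `u⬝{1,G} = {1, uG} - G⬝{1,u}` is fibrewise affine
for every fibre coordinate `u`, which forces `{1,G}` to be fibrewise constant.
-/

namespace JacobiBracket

variable {N : Type*} {S : (N → ℝ) → Prop} (J : JacobiBracket N S)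

theorem br_self {f : N → ℝ} (hf : S f) : J.br f f = 0 := by
  funext p
  have h := congrFun (J.antisymm f f hf hf) p
  simp only [Pi.neg_apply] at h
  simp only [Pi.zero_apply]
  linarith

theorem leibniz_left {f g h : N → ℝ} (hf : S f) (hg : S g) (hh : S h) (h1 : S 1)
    (hgh : S (g * h)) :
    J.br (g * h) f = J.br g f * h + g * J.br h f - g * h * J.br 1 f := by
  rw [J.antisymm (g * h) f hgh hf, J.leibniz f g h hf hg hh, J.antisymm f g hf hg,
    J.antisymm f h hf hh, J.antisymm f 1 hf h1]
  ring

theorem br_one_mul {g h : N → ℝ} (hg : S g) (hh : S h) (h1 : S 1) :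
    J.br 1 (g * h) = J.br 1 g * h + g * J.br 1 h := by
  rw [J.leibniz 1 g h h1 hg hh, J.br_self h1]
  ring

theorem br_mul_mul {u F G : N → ℝ} (hu : S u) (hF : S F) (hG : S G) (h1 : S 1)
    (huF : S (u * F)) :
    J.br (u * F) (u * G) = G * J.br (u * F) u + F * J.br u (u * G)
      + u ^ 2 * (J.br F G - F * J.br 1 G - G * J.br F 1) := by
  have e1 := J.leibniz (u * F) u G huF hu hG
  have e2 := J.leibniz_left hG hu hF h1 huF
  have e3 := J.leibniz_left h1 hu hF h1 huF
  have e4 := J.leibniz u u G hu hu hG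
  rw [J.br_self h1] at e3
  rw [J.br_self hu] at e4
  linear_combination e1 + u * e2 - u * G * e3 - F * e4

end JacobiBracket

theorem eq_zero_of_mul_affine_eq_affine {a b c d : ℝ}
    (h : ∀ t : ℝ, t * (a * t + b) = c * t + d) : a = 0 := by
  have h0 := h 0
  have h1 := h 1
  have h2 := h (-1)
  linarith

theorem eq_zero_of_sq_mul_affine_eq_affine {a b c d : ℝ}
    (h : ∀ t : ℝ, t ^ 2 * (a * t + b) = c * t + d) : a = 0 ∧ b = 0 := by
  have h0 := h 0
  have h1 := h 1
  have h2 := h (-1)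
  have h3 := h 2
  constructor <;> linarith

section FibreFunctions

variable {M : Type*} {n : ℕ}

def IsFibConst {V : Type*} (Φ : M × V → ℝ) : Prop :=
  ∃ f : M → ℝ, Φ = fun p => f p.1

namespace IsFibConst

variable {V : Type*} {Φ Ψ : M × V → ℝ}

theorem add (hΦ : IsFibConst Φ) (hΨ : IsFibConst Ψ) : IsFibConst (Φ + Ψ) := by
  obtain ⟨f, rfl⟩ := hΦ
  obtain ⟨g, rfl⟩ := hΨ
  exact ⟨f + g, rfl⟩

theorem mul (hΦ : IsFibConst Φ) (hΨ : IsFibConst Ψ) : IsFibConst (Φ * Ψ) := by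
  obtain ⟨f, rfl⟩ := hΦ
  obtain ⟨g, rfl⟩ := hΨ
  exact ⟨f * g, rfl⟩

theorem neg (hΦ : IsFibConst Φ) : IsFibConst (-Φ) := by
  obtain ⟨f, rfl⟩ := hΦ
  exact ⟨-f, rfl⟩

end IsFibConst

theorem isFibConst_one {V : Type*} : IsFibConst (1 : M × V → ℝ) := ⟨1, rfl⟩

theorem isFibAffine_coord (j : Fin n) : IsFibAffine (fun p : M × (Fin n → ℝ) => p.2 j) :=
  fun _ => ⟨LinearMap.proj j, 0, by simp⟩

namespace IsFibAffine

variable {Φ Ψ : M × (Fin n → ℝ) → ℝ}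

theorem sub (hΦ : IsFibAffine Φ) (hΨ : IsFibAffine Ψ) : IsFibAffine (Φ - Ψ) := fun x => by
  obtain ⟨μ, c, hμ⟩ := hΦ x
  obtain ⟨ν, d, hν⟩ := hΨ x
  refine ⟨μ - ν, c - d, fun v => ?_⟩
  simp only [Pi.sub_apply, hμ, hν, LinearMap.sub_apply]
  ring

theorem _root_.IsFibConst.mul_isFibAffine (hΦ : IsFibConst Φ) (hΨ : IsFibAffine Ψ) :
    IsFibAffine (Φ * Ψ) := fun x => by
  obtain ⟨f, rfl⟩ := hΦ
  obtain ⟨μ, c, hμ⟩ := hΨ x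
  refine ⟨f x • μ, f x * c, fun v => ?_⟩
  simp only [Pi.mul_apply, hμ, LinearMap.smul_apply, smul_eq_mul]
  ring

theorem _root_.IsFibConst.isFibAffine (hΦ : IsFibConst Φ) : IsFibAffine Φ := fun x => by
  obtain ⟨f, rfl⟩ := hΦ
  exact ⟨0, f x, by simp⟩

theorem exists_line (hΦ : IsFibAffine Φ) (x : M) (v w : Fin n → ℝ) :
    ∃ a b : ℝ, ∀ t : ℝ, Φ (x, v + t • w) = a * t + b := by
  obtain ⟨μ, c, hμ⟩ := hΦ x
  exact ⟨μ w, μ v + c, fun t => by rw [hμ, map_add, map_smul, smul_eq_mul]; ring⟩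

theorem isFibConst_of_coord_mul (hΦ : IsFibAffine Φ)
    (hu : ∀ j, IsFibAffine ((fun p : M × (Fin n → ℝ) => p.2 j) * Φ)) : IsFibConst Φ := by
  refine ⟨fun x => Φ (x, 0), funext fun ⟨x, v⟩ => ?_⟩
  obtain ⟨μ, c, hμ⟩ := hΦ x
  have hμ0 : μ = 0 := (Pi.basisFun ℝ (Fin n)).ext fun j => by
    obtain ⟨a, b, hab⟩ := (hu j).exists_line x 0 (Pi.single j 1)
    rw [Pi.basisFun_apply, LinearMap.zero_apply]
    refine eq_zero_of_mul_affine_eq_affine (b := c) (c := a) (d := b) fun t => ?_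
    simpa [hμ, mul_comm] using hab t
  simp [hμ, hμ0]

theorem eq_zero_of_coord_sq_mul (hΦ : IsFibAffine Φ) (j : Fin n)
    (hu : IsFibAffine ((fun p : M × (Fin n → ℝ) => p.2 j) ^ 2 * Φ)) : Φ = 0 := by
  funext ⟨x, v⟩
  -- on the line `w + t • eⱼ` the coordinate `vⱼ` equals `t`, and `v` lies on it at `t = vⱼ`
  set w := Function.update v j 0
  have hv : v = w + v j • Pi.single j 1 := by
    ext k
    by_cases hk : k = j <;> simp [w, hk]
  obtain ⟨a, b, hab⟩ := hΦ.exists_line x w (Pi.single j 1)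
  obtain ⟨c, d, hcd⟩ := hu.exists_line x w (Pi.single j 1)
  obtain ⟨rfl, rfl⟩ : a = 0 ∧ b = 0 := eq_zero_of_sq_mul_affine_eq_affine (c := c) (d := d)
    fun t => by simpa [w, hab] using hcd t
  simpa [← hv] using hab (v j)

end IsFibAffine

end FibreFunctions

def JacobiBracket.IsAffine {M : Type*} {n : ℕ} {S : (M × (Fin n → ℝ) → ℝ) → Prop}
    (J : JacobiBracket (M × (Fin n → ℝ)) S) : Prop :=
  ∀ a b, S a → S b → IsFibAffine a → IsFibAffine b → IsFibAffine (J.br a b)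

section SmoothBundle

variable {EM : Type*} [NormedAddCommGroup EM] [NormedSpace ℝ EM]
  {HM : Type*} [TopologicalSpace HM] {IM : ModelWithCorners ℝ EM HM}
  {M : Type*} [TopologicalSpace M] [ChartedSpace HM M] {n : ℕ}

theorem smoothBdl_one : SmoothBdl IM M n 1 := contMDiff_const

theorem smoothBdl_coord (j : Fin n) : SmoothBdl IM M n fun p => p.2 j :=
  (ContinuousLinearMap.proj j : (Fin n → ℝ) →L[ℝ] ℝ).contMDiff.comp contMDiff_snd

theorem SmoothBdl.mul {Φ Ψ : M × (Fin n → ℝ) → ℝ} (hΦ : SmoothBdl IM M n Φ)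
    (hΨ : SmoothBdl IM M n Ψ) : SmoothBdl IM M n (Φ * Ψ) :=
  ContMDiff.mul hΦ hΨ

namespace IsBasic

variable {F : M × (Fin n → ℝ) → ℝ}

theorem smoothBdl (hF : IsBasic IM M n F) : SmoothBdl IM M n F := by
  obtain ⟨f, hf, rfl⟩ := hF
  exact hf.comp contMDiff_fst

theorem isFibConst (hF : IsBasic IM M n F) : IsFibConst F := by
  obtain ⟨f, -, rfl⟩ := hF
  exact ⟨f, rfl⟩

end IsBasic

theorem isBasic_of_isFibConst {Φ : M × (Fin n → ℝ) → ℝ} (hs : SmoothBdl IM M n Φ)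
    (hc : IsFibConst Φ) : IsBasic IM M n Φ := by
  refine ⟨fun x => Φ (x, 0), hs.comp (contMDiff_id.prodMk contMDiff_const), ?_⟩
  obtain ⟨f, rfl⟩ := hc
  rfl

variable {J : JacobiBracket (M × (Fin n → ℝ)) (SmoothBdl IM M n)}
  {F G : M × (Fin n → ℝ) → ℝ}

theorem isFibConst_br_one (haff : J.IsAffine) (hG : IsBasic IM M n G) :
    IsFibConst (J.br 1 G) := by
  refine (haff _ _ smoothBdl_one hG.smoothBdl isFibConst_one.isFibAffine
    hG.isFibConst.isFibAffine).isFibConst_of_coord_mul fun j => ?_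
  set u : M × (Fin n → ℝ) → ℝ := fun p => p.2 j
  have hu : SmoothBdl IM M n u := smoothBdl_coord j
  have hGs := hG.smoothBdl
  have hGc := hG.isFibConst
  rw [show u * J.br 1 G = J.br 1 (G * u) - G * J.br 1 u by
    rw [J.br_one_mul hGs hu smoothBdl_one]; ring]
  exact (haff _ _ smoothBdl_one (hGs.mul hu) isFibConst_one.isFibAffine
    (hGc.mul_isFibAffine (isFibAffine_coord j))).sub
    (hGc.mul_isFibAffine (haff _ _ smoothBdl_one hu isFibConst_one.isFibAffine
      (isFibAffine_coord j)))

theorem br_sub_eq_zero_of_isBasic (haff : J.IsAffine) (j : Fin n) (hF : IsBasic IM M n F)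
    (hG : IsBasic IM M n G) : J.br F G - F * J.br 1 G - G * J.br F 1 = 0 := by
  set u : M × (Fin n → ℝ) → ℝ := fun p => p.2 j
  have hu : SmoothBdl IM M n u := smoothBdl_coord j
  have hFs := hF.smoothBdl
  have hGs := hG.smoothBdl
  have hFc := hF.isFibConst
  have hGc := hG.isFibConst
  have huF : IsFibAffine (u * F) := mul_comm F u ▸ hFc.mul_isFibAffine (isFibAffine_coord j)
  have huG : IsFibAffine (u * G) := mul_comm G u ▸ hGc.mul_isFibAffine (isFibAffine_coord j)
  refine IsFibAffine.eq_zero_of_coord_sq_mul ?_ j ?_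
  · exact ((haff _ _ hFs hGs hFc.isFibAffine hGc.isFibAffine).sub (hFc.mul_isFibAffine
      (haff _ _ smoothBdl_one hGs isFibConst_one.isFibAffine hGc.isFibAffine))).sub
      (hGc.mul_isFibAffine
        (haff _ _ hFs smoothBdl_one hFc.isFibAffine isFibConst_one.isFibAffine))
  · rw [show u ^ 2 * (J.br F G - F * J.br 1 G - G * J.br F 1)
        = J.br (u * F) (u * G) - G * J.br (u * F) u - F * J.br u (u * G) by
      rw [J.br_mul_mul hu hFs hGs smoothBdl_one (hu.mul hFs)]; ring]
    exact ((haff _ _ (hu.mul hFs) (hu.mul hGs) huF huG).sub (hGc.mul_isFibAffine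
      (haff _ _ (hu.mul hFs) hu huF (isFibAffine_coord j)))).sub
      (hFc.mul_isFibAffine (haff _ _ hu (hu.mul hGs) (isFibAffine_coord j) huG))

end SmoothBundle

theorem stmt1_general
    {EM : Type*} [NormedAddCommGroup EM] [NormedSpace ℝ EM]
    {HM : Type*} [TopologicalSpace HM] (IM : ModelWithCorners ℝ EM HM)
    (M : Type*) [TopologicalSpace M] [ChartedSpace HM M]
    (n : ℕ) (hn : 1 ≤ n)
    (J : JacobiBracket (M × (Fin n → ℝ)) (SmoothBdl IM M n))
    (haff : ∀ a b, SmoothBdl IM M n a → SmoothBdl IM M n b →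
      IsFibAffine a → IsFibAffine b → IsFibAffine (J.br a b))
    (F G : M × (Fin n → ℝ) → ℝ)
    (hFbasic : IsBasic IM M n F)
    (hGbasic : IsBasic IM M n G) :
    IsBasic IM M n (J.br F G) ∧
      J.br F G = F * J.br 1 G + G * J.br F 1 := by
  have hFG : J.br F G = F * J.br 1 G + G * J.br F 1 := by
    linear_combination br_sub_eq_zero_of_isBasic haff ⟨0, hn⟩ hFbasic hGbasic
  refine ⟨isBasic_of_isFibConst (J.smooth_br F G hFbasic.smoothBdl hGbasic.smoothBdl) ?_, hFG⟩
  rw [hFG, J.antisymm F 1 hFbasic.smoothBdl smoothBdl_one]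
  exact (hFbasic.isFibConst.mul (isFibConst_br_one haff hGbasic)).add
    (hGbasic.isFibConst.mul (isFibConst_br_one haff hFbasic).neg)

/-- for an affine Jacobi bracket on the trivial bundle `M × ℝⁿ`, `n ≥ 1`,
and any basic functions `F, G`, the bracket `{F,G}` is basic and
`{F,G} = F⬝{1,G} + G⬝{F,1}`. -/
theorem stmt1
    {EM : Type*} [NormedAddCommGroup EM] [NormedSpace ℝ EM] [FiniteDimensional ℝ EM]
    {HM : Type*} [TopologicalSpace HM] (IM : ModelWithCorners ℝ EM HM)
    (M : Type*) [TopologicalSpace M] [ChartedSpace HM M] [IsManifold IM ((⊤ : ℕ∞) : WithTop ℕ∞) M]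
    (n : ℕ) (hn : 1 ≤ n)
    (J : JacobiBracket (M × (Fin n → ℝ)) (SmoothBdl IM M n))
    (haff : ∀ a b, SmoothBdl IM M n a → SmoothBdl IM M n b →
      IsFibAffine a → IsFibAffine b → IsFibAffine (J.br a b))
    (F G : M × (Fin n → ℝ) → ℝ)
    (hF : SmoothBdl IM M n F) (hFbasic : IsBasic IM M n F)
    (hG : SmoothBdl IM M n G) (hGbasic : IsBasic IM M n G) :
    IsBasic IM M n (J.br F G) ∧
      J.br F G = F * J.br 1 G + G * J.br F 1 :=
  stmt1_general IM M n hn J haff F G hFbasic hGbasic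
end

section
/- Let V be a finite-dimensional real vector space with dim V > 0 and let {·,·} be an affine Jacobi bracket on C^∞(V,ℝ). Then the following are equivalent: (i) {·,·} is strongly affine, i.e. for all affine functions a,b the function {a,b} + b·{1,a} (the value of the hamiltonian first-order operator of a on b) is affine; (ii) {1,a} is a constant function for every affine function a; (iii) there exists a linear map X̄₀ : Aff(V,ℝ) → ℝ such that {1,a} is the constant function with value −X̄₀(a) for every affine function a. -/
/-- Smooth (C^∞) real functions on a normed space `V`. -/
def Cinf (V : Type*) [NormedAddCommGroup V] [NormedSpace ℝ V] : (V → ℝ) → Prop :=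
  fun f => ContDiff ℝ (⊤ : ℕ∞) f

/-- Affine real functions on a real vector space: `x ↦ μ(x) + c` with `μ` linear. -/
def IsAffineFn {V : Type*} [AddCommGroup V] [Module ℝ V] (f : V → ℝ) : Prop :=
  ∃ (μ : V →ₗ[ℝ] ℝ) (c : ℝ), ∀ x, f x = μ x + c

/-- A Jacobi bracket on `C^∞(V,ℝ)` is affine if the bracket of two affine functions
is affine. -/
def IsAffineJacobi {V : Type*} [NormedAddCommGroup V] [NormedSpace ℝ V]
    (J : JacobiBracket V (Cinf V)) : Prop :=
  ∀ a b, Cinf V a → Cinf V b → IsAffineFn a → IsAffineFn b → IsAffineFn (J.br a b)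

set_option linter.unusedSectionVars false

section Aux
variable {V : Type*} [NormedAddCommGroup V] [NormedSpace ℝ V] [FiniteDimensional ℝ V]

lemma aff_one : IsAffineFn (1 : V → ℝ) := ⟨0, 1, fun x => by simp⟩

lemma aff_smooth {f : V → ℝ} (h : IsAffineFn f) : Cinf V f := by
  obtain ⟨μ, c, h⟩ := h
  have : f = fun x => μ x + c := funext h
  rw [this]
  exact (LinearMap.toContinuousLinearMap μ).contDiff.add contDiff_const

lemma cinf_one : Cinf V (1 : V → ℝ) := aff_smooth aff_one

lemma aff_add {f g : V → ℝ} (hf : IsAffineFn f) (hg : IsAffineFn g) :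
    IsAffineFn (f + g) := by
  obtain ⟨μ, c, hf⟩ := hf; obtain ⟨ν, d, hg⟩ := hg
  exact ⟨μ + ν, c + d, fun x => by simp [hf x, hg x]; ring⟩

lemma aff_sub {f g : V → ℝ} (hf : IsAffineFn f) (hg : IsAffineFn g) :
    IsAffineFn (fun x => f x - g x) := by
  obtain ⟨μ, c, hf⟩ := hf; obtain ⟨ν, d, hg⟩ := hg
  exact ⟨μ - ν, c - d, fun x => by simp [hf x, hg x]; ring⟩

lemma br_add_right (J : JacobiBracket V (Cinf V)) {f g : V → ℝ}
    (hf : Cinf V f) (hg : Cinf V g) : J.br 1 (f + g) = J.br 1 f + J.br 1 g := by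
  rw [J.antisymm 1 (f + g) cinf_one (hf.add hg),
    J.add_left f g 1 hf hg cinf_one,
    J.antisymm f 1 hf cinf_one, J.antisymm g 1 hg cinf_one]
  abel

lemma br_smul_right (J : JacobiBracket V (Cinf V)) (c : ℝ) {f : V → ℝ}
    (hf : Cinf V f) : J.br 1 (c • f) = c • J.br 1 f := by
  rw [J.antisymm 1 (c • f) cinf_one (hf.const_smul c),
    J.smul_left c f 1 hf cinf_one, J.antisymm f 1 hf cinf_one]
  ext x; simp

lemma key_const {μ : V →ₗ[ℝ] ℝ} {c : ℝ}
    (h : IsAffineFn (fun x => μ x * (μ x + c))) : ∀ x, μ x = 0 := by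
  obtain ⟨ν, d, h⟩ := h
  have h0 : d = 0 := by have := h 0; simpa using this.symm
  intro x
  have h1 := h x
  have h2 := h (2 • x)
  simp [h0, two_smul, map_add, mul_add] at h1 h2
  nlinarith [sq_nonneg (μ x)]

end Aux

/-- for an affine Jacobi bracket on `C^∞(V,ℝ)`, `V` finite-dimensional
of positive dimension, the following are equivalent: (i) the bracket is strongly
affine, i.e. `b ↦ {a,b} + b·{1,a}` maps affine functions to affine functions for all
affine `a`; (ii) `{1,a}` is constant for every affine `a`; (iii) there is a linear
map `X̄₀ : Aff(V,ℝ) → ℝ` with `{1,a} ≡ −X̄₀(a)` for every affine `a`. -/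
theorem stmt9 (V : Type*) [NormedAddCommGroup V] [NormedSpace ℝ V]
    [FiniteDimensional ℝ V] (hV : 0 < Module.finrank ℝ V)
    (J : JacobiBracket V (Cinf V)) (hJ : IsAffineJacobi J) :
    ((∀ a b, Cinf V a → Cinf V b → IsAffineFn a → IsAffineFn b →
        IsAffineFn (fun x => J.br a b x + b x * J.br 1 a x)) ↔
      (∀ a, Cinf V a → IsAffineFn a → ∃ c : ℝ, J.br 1 a = fun _ => c)) ∧
    ((∀ a, Cinf V a → IsAffineFn a → ∃ c : ℝ, J.br 1 a = fun _ => c) ↔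
      (∃ X₀ : (V →ᵃ[ℝ] ℝ) →ₗ[ℝ] ℝ, ∀ a : V →ᵃ[ℝ] ℝ, J.br 1 ⇑a = fun _ => -X₀ a)) := by
  have haffmap : ∀ f : V →ᵃ[ℝ] ℝ, IsAffineFn ⇑f := fun f =>
    ⟨f.linear, f 0, fun x => by rw [f.decomp]; simp⟩
  constructor
  · constructor
    · -- (i) → (ii)
      intro hi a ha haff
      obtain ⟨μ, c, hbr⟩ := hJ 1 a cinf_one ha aff_one haff
      have hmu_aff : IsAffineFn (⇑μ) := ⟨μ, 0, fun x => by simp⟩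
      have h1 : IsAffineFn (fun x => J.br a ⇑μ x + μ x * J.br 1 a x) :=
        hi a ⇑μ ha (aff_smooth hmu_aff) haff hmu_aff
      have h2 : IsAffineFn (J.br a ⇑μ) := hJ a ⇑μ ha (aff_smooth hmu_aff) haff hmu_aff
      have h3 : IsAffineFn (fun x => μ x * (μ x + c)) := by
        have h4 := aff_sub h1 h2
        have h5 : (fun x => (J.br a ⇑μ x + μ x * J.br 1 a x) - J.br a ⇑μ x)
            = fun x => μ x * (μ x + c) := by
          funext x; rw [hbr x]; ring
        rwa [h5] at h4
      have hz := key_const h3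
      exact ⟨c, funext fun x => by rw [hbr x, hz x, zero_add]⟩
    · -- (ii) → (i)
      intro hii a b ha hb haff hbff
      obtain ⟨c, hc⟩ := hii a ha haff
      have heq : (fun x => J.br a b x + b x * J.br 1 a x)
          = fun x => J.br a b x + c * b x := by
        funext x; rw [hc]; ring
      rw [heq]
      obtain ⟨μ1, c1, h1⟩ := hJ a b ha hb haff hbff
      obtain ⟨μ2, c2, h2⟩ := hbff
      exact ⟨μ1 + c • μ2, c1 + c * c2, fun x => by
        simp [h1 x, h2 x]; ring⟩
  · constructor
    · -- (ii) → (iii)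
      intro hii
      have key : ∀ a : V →ᵃ[ℝ] ℝ, J.br 1 ⇑a = fun _ => J.br 1 ⇑a 0 := by
        intro a
        obtain ⟨c, hc⟩ := hii ⇑a (aff_smooth (haffmap a)) (haffmap a)
        rw [hc]
      refine ⟨{ toFun := fun a => -(J.br 1 ⇑a 0), map_add' := ?_, map_smul' := ?_ }, ?_⟩
      · intro a b
        show -(J.br 1 ⇑(a + b) 0) = -(J.br 1 ⇑a 0) + -(J.br 1 ⇑b 0)
        rw [AffineMap.coe_add, br_add_right J (aff_smooth (haffmap a)) (aff_smooth (haffmap b))]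
        simp; ring
      · intro m a
        show -(J.br 1 ⇑(m • a) 0) = m • -(J.br 1 ⇑a 0)
        rw [AffineMap.coe_smul, br_smul_right J m (aff_smooth (haffmap a))]
        simp
      · intro a
        simpa using key a
    · -- (iii) → (ii)
      rintro ⟨X₀, hX⟩ a ha haff
      obtain ⟨μ, c, h⟩ := haff
      let a' : V →ᵃ[ℝ] ℝ := ⟨a, μ, fun p v => by simp [h, map_add, vadd_eq_add]; ring⟩
      have hcoe : J.br 1 a = J.br 1 ⇑a' := rfl
      exact ⟨-X₀ a', hcoe.trans (hX a')⟩
end
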